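/- For the phase γ(r,θ,r̃) = r(1 - r̃ cos(θ-ω)) + r' r̃ cos(θ'-ω) - r̃ α with fixed r', θ', ω, α, a point with r, r̃ > 0 is a critical point if and only if r̃ = 1, θ ≡ ω (mod 2π), and r = r' cos(θ'-ω) - α. In particular if r' cos(θ'-ω) - α ≤ 0, γ has no critical points in the region r > 0, r̃ > 0. -/

import Mathlib

/-! The partial derivatives of γ are `1 - r̃ cos (θ - ω)`, `r r̃ sin (θ - ω)` and
`r' cos (θ' - ω) - α - r cos (θ - ω)`. For `r, r̃ > 0` the second vanishes only when
`cos (θ - ω) = ±1`; the first rules out `-1` and then forces `r̃ = 1`, and the third reads off `r`. -/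

open Real

theorem mul_cos_eq_one_and_sin_eq_zero_iff {t x : ℝ} (ht : 0 < t) :
    t * cos x = 1 ∧ sin x = 0 ↔ t = 1 ∧ cos x = 1 := by
  constructor
  · rintro ⟨hcos, hsin⟩
    rcases sin_eq_zero_iff_cos_eq.1 hsin with h | h
    · simpa [h] using hcos
    · rw [h] at hcos; linarith
  · rintro ⟨rfl, h⟩
    exact ⟨by simp [h], sin_eq_zero_iff_cos_eq.2 (Or.inl h)⟩

theorem cos_sub_eq_one_iff (θ ω : ℝ) : cos (θ - ω) = 1 ↔ ∃ n : ℤ, θ = ω + n * (2 * π) := by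
  simp only [cos_eq_one_iff, eq_comm (a := θ), ← eq_sub_iff_add_eq']

noncomputable def phase (r' θ' ω α r θ rt : ℝ) : ℝ :=
  r * (1 - rt * cos (θ - ω)) + r' * rt * cos (θ' - ω) - rt * α

section Phase

variable (r' θ' ω α : ℝ)

theorem deriv_phase_radius (r θ rt : ℝ) :
    deriv (fun x => phase r' θ' ω α x θ rt) r = 1 - rt * cos (θ - ω) := by
  simp [phase]

theorem deriv_phase_angle (r θ rt : ℝ) :
    deriv (fun x => phase r' θ' ω α r x rt) θ = r * rt * sin (θ - ω) := by
  simp [phase, mul_assoc]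

theorem deriv_phase_scale (r θ rt : ℝ) :
    deriv (fun x => phase r' θ' ω α r θ x) rt = r' * cos (θ' - ω) - α - r * cos (θ - ω) := by
  have affine : (fun x => phase r' θ' ω α r θ x) =
      fun x => x * (r' * cos (θ' - ω) - α - r * cos (θ - ω)) + r := by
    ext x; simp only [phase]; ring
  simp [affine]

theorem phase_partials_eq_zero_iff {r θ rt : ℝ} (hr : 0 < r) (hrt : 0 < rt) :
    (deriv (fun x => phase r' θ' ω α x θ rt) r = 0 ∧
        deriv (fun x => phase r' θ' ω α r x rt) θ = 0 ∧
        deriv (fun x => phase r' θ' ω α r θ x) rt = 0) ↔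
      rt = 1 ∧ (∃ n : ℤ, θ = ω + n * (2 * π)) ∧ r = r' * cos (θ' - ω) - α := by
  rw [deriv_phase_radius, deriv_phase_angle, deriv_phase_scale, sub_eq_zero, eq_comm,
    mul_eq_zero, or_iff_right (by positivity), ← and_assoc, mul_cos_eq_one_and_sin_eq_zero_iff hrt,
    and_assoc, ← cos_sub_eq_one_iff]
  refine and_congr_right fun _ => and_congr_right fun hcos => ?_
  rw [hcos]
  constructor <;> intro <;> linarith

end Phase

theorem critical_points_of_3d_phase_general (r' θ' ω α : ℝ)
    (γ : ℝ → ℝ → ℝ → ℝ)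
    (hγ : ∀ r θ rt,
      γ r θ rt = r * (1 - rt * Real.cos (θ - ω))
        + r' * rt * Real.cos (θ' - ω) - rt * α) :
    (∀ r θ rt : ℝ, 0 < r → 0 < rt →
      ((deriv (fun x => γ x θ rt) r = 0 ∧
        deriv (fun x => γ r x rt) θ = 0 ∧
        deriv (fun x => γ r θ x) rt = 0) ↔
      (rt = 1 ∧ (∃ n : ℤ, θ = ω + n * (2 * π)) ∧
        r = r' * Real.cos (θ' - ω) - α))) ∧
    (r' * Real.cos (θ' - ω) - α ≤ 0 →
      ∀ r θ rt : ℝ, 0 < r → 0 < rt →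
        ¬(deriv (fun x => γ x θ rt) r = 0 ∧
          deriv (fun x => γ r x rt) θ = 0 ∧
          deriv (fun x => γ r θ x) rt = 0)) := by
  obtain rfl : γ = phase r' θ' ω α := funext fun r => funext fun θ => funext (hγ r θ)
  refine ⟨fun r θ rt hr hrt => phase_partials_eq_zero_iff r' θ' ω α hr hrt,
    fun hle r θ rt hr hrt hcrit => ?_⟩
  obtain ⟨-, -, rfl⟩ := (phase_partials_eq_zero_iff r' θ' ω α hr hrt).1 hcrit
  exact hle.not_gt hr

theorem critical_points_of_3d_phase (r' θ' ω α : ℝ) (hr' : 0 < r')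
    (γ : ℝ → ℝ → ℝ → ℝ)
    (hγ : ∀ r θ rt,
      γ r θ rt = r * (1 - rt * Real.cos (θ - ω))
        + r' * rt * Real.cos (θ' - ω) - rt * α) :
    (∀ r θ rt : ℝ, 0 < r → 0 < rt →
      ((deriv (fun x => γ x θ rt) r = 0 ∧
        deriv (fun x => γ r x rt) θ = 0 ∧
        deriv (fun x => γ r θ x) rt = 0) ↔
      (rt = 1 ∧ (∃ n : ℤ, θ = ω + n * (2 * π)) ∧
        r = r' * Real.cos (θ' - ω) - α))) ∧
    (r' * Real.cos (θ' - ω) - α ≤ 0 →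
      ∀ r θ rt : ℝ, 0 < r → 0 < rt →
        ¬(deriv (fun x => γ x θ rt) r = 0 ∧
          deriv (fun x => γ r x rt) θ = 0 ∧
          deriv (fun x => γ r θ x) rt = 0)) :=
  critical_points_of_3d_phase_general r' θ' ω α γ hγ
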